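/- arXiv:1904.05142 — 2 statements merged into one kernel-verified Lean document; each statement's English description precedes it below -/
import Mathlib

section
/- Let f be a finite-energy steady state of the BGK equation with reservoirs. Then the fourth moment satisfies −d²/dx² ∫_R v⁴ f(x,v) dv = (1−α) ((T₁+T₂)/2) (ρ_f(x) − 1), in the sense of distributions on the torus. -/
open MeasureTheory Real Set

/-- The unit torus represented as the interval `[-1/2, 1/2]`. -/
def Torus : Set ℝ := Set.Icc (-(1:ℝ)/2) (1/2)

/-- Centered Maxwellian at temperature `T`. -/
noncomputable def Maxwellian (T v : ℝ) : ℝ :=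
  (Real.sqrt (2 * Real.pi * T))⁻¹ * Real.exp (-v ^ 2 / (2 * T))

/-- Spatial density of a kinetic density. -/
noncomputable def rho (f : ℝ → ℝ → ℝ) (x : ℝ) : ℝ := ∫ v, f x v

/-- Pressure of a kinetic density. -/
noncomputable def press (f : ℝ → ℝ → ℝ) (x : ℝ) : ℝ := ∫ v, v ^ 2 * f x v

/-- Local Maxwellian `ℳ_f` with density `ρ_f` and temperature `T_f = P_f / ρ_f`. -/
noncomputable def localMaxwellian (f : ℝ → ℝ → ℝ) (x v : ℝ) : ℝ :=
  rho f x * Maxwellian (press f x / rho f x) v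

/-! ### Auxiliary lemmas -/

lemma integral_odd_zero (g : ℝ → ℝ) (h : ∀ v, g (-v) = - g v) : ∫ v, g v = 0 := by
  have h1 : ∫ v, g (-v) = ∫ v, g v :=
    (Measure.measurePreserving_neg (volume : Measure ℝ)).integral_comp
      (Homeomorph.neg ℝ).measurableEmbedding g
  simp_rw [h, integral_neg] at h1
  linarith

lemma integrable_pow_mul_gauss {b : ℝ} (hb : 0 < b) (n : ℕ) :
    Integrable fun x : ℝ => x ^ n * Real.exp (-b * x ^ 2) := by
  have := integrable_rpow_mul_exp_neg_mul_sq hb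
    (s := (n : ℝ)) (lt_of_lt_of_le neg_one_lt_zero (Nat.cast_nonneg n))
  simpa [Real.rpow_natCast] using this

lemma integral_sq_mul_gauss {b : ℝ} (hb : 0 < b) :
    ∫ x : ℝ, x ^ 2 * Real.exp (-b * x ^ 2) = Real.sqrt (π / b) / (2 * b) := by
  have hderiv : ∀ x : ℝ, HasDerivAt (fun x : ℝ => x * Real.exp (-b * x ^ 2))
      (Real.exp (-b * x ^ 2) - 2 * b * (x ^ 2 * Real.exp (-b * x ^ 2))) x := by
    intro x
    have h1 : HasDerivAt (fun x : ℝ => -b * x ^ 2) (-b * (2 * x)) x := by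
      simpa using (hasDerivAt_pow 2 x).const_mul (-b)
    have h3 := (hasDerivAt_id x).mul h1.exp
    refine h3.congr_deriv ?_
    simp only [id_eq]
    ring
  have hint : Integrable (fun x : ℝ =>
      Real.exp (-b * x ^ 2) - 2 * b * (x ^ 2 * Real.exp (-b * x ^ 2))) :=
    (integrable_exp_neg_mul_sq hb).sub (((integrable_pow_mul_gauss hb 2)).const_mul _)
  have h0 := integral_eq_zero_of_hasDerivAt_of_integrable hderiv hint
    (integrable_mul_exp_neg_mul_sq hb)
  rw [integral_sub (integrable_exp_neg_mul_sq hb)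
    ((integrable_pow_mul_gauss hb 2).const_mul _), integral_gaussian,
    integral_const_mul] at h0
  rw [eq_div_iff (by positivity : (2:ℝ)*b ≠ 0)]
  linarith

lemma maxwellian_eq {T : ℝ} (hT : 0 < T) (v : ℝ) :
    Maxwellian T v = (Real.sqrt (2 * π * T))⁻¹ * Real.exp (-(1/(2*T)) * v ^ 2) := by
  unfold Maxwellian
  congr 1
  congr 1
  field_simp

lemma integrable_pow_mul_maxwellian {T : ℝ} (hT : 0 < T) (n : ℕ) :
    Integrable (fun v : ℝ => v ^ n * Maxwellian T v) := by
  have hb : 0 < 1/(2*T) := by positivity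
  have := ((integrable_pow_mul_gauss hb n).const_mul ((Real.sqrt (2 * π * T))⁻¹))
  apply this.congr
  filter_upwards with v
  rw [maxwellian_eq hT]
  ring

lemma sqrt_two_pi_T_pos {T : ℝ} (hT : 0 < T) : 0 < Real.sqrt (2 * π * T) := by
  have := Real.pi_pos
  positivity

lemma integral_sq_mul_maxwellian {T : ℝ} (hT : 0 < T) :
    ∫ v : ℝ, v ^ 2 * Maxwellian T v = T := by
  have hb : 0 < 1/(2*T) := by positivity
  have h2 : π / (1/(2*T)) = 2 * π * T := by field_simp
  have : (fun v : ℝ => v ^ 2 * Maxwellian T v)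
      = fun v : ℝ => (Real.sqrt (2 * π * T))⁻¹ * (v ^ 2 * Real.exp (-(1/(2*T)) * v ^ 2)) := by
    funext v; rw [maxwellian_eq hT]; ring
  rw [this, integral_const_mul, integral_sq_mul_gauss hb, h2]
  have h4 : 2 * (1/(2*T)) = 1/T := by field_simp
  rw [h4]
  have h5 : Real.sqrt (2*π*T) ≠ 0 := ne_of_gt (sqrt_two_pi_T_pos hT)
  field_simp

lemma integral_cube_mul_maxwellian (T : ℝ) :
    ∫ v : ℝ, v ^ 3 * Maxwellian T v = 0 := by
  apply integral_odd_zero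
  intro v
  unfold Maxwellian
  rw [Odd.neg_pow ⟨1, by ring⟩, neg_sq]
  ring

lemma abs_pow_le_one_add_pow_four {k : ℕ} (hk : k ≤ 4) (v : ℝ) :
    |v| ^ k ≤ 1 + v ^ 4 := by
  have h4 : (0:ℝ) ≤ v ^ 4 := by positivity
  rcases le_total (|v|) 1 with h | h
  · have : |v| ^ k ≤ 1 := pow_le_one₀ (abs_nonneg v) h
    linarith
  · have h1 : |v| ^ k ≤ |v| ^ 4 := pow_le_pow_right₀ h hk
    have h2 : |v| ^ 4 = v ^ 4 := by
      rw [← abs_pow, abs_of_nonneg h4]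
    linarith

lemma integrable_pow_mul_of_moment {g : ℝ → ℝ} (hg_meas : Measurable g)
    (hg0 : ∀ v, 0 ≤ g v) (hg_int : Integrable (fun v => (1 + v ^ 4) * g v))
    {k : ℕ} (hk : k ≤ 4) : Integrable (fun v : ℝ => v ^ k * g v) := by
  apply hg_int.mono' ((measurable_id.pow_const k).mul hg_meas).aestronglyMeasurable
  filter_upwards with v
  have h1 : ‖v ^ k * g v‖ = |v| ^ k * g v := by
    rw [norm_mul, Real.norm_eq_abs, Real.norm_eq_abs, abs_pow, abs_of_nonneg (hg0 v)]
  show ‖v ^ k * g v‖ ≤ (1 + v ^ 4) * g v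
  rw [h1]
  exact mul_le_mul_of_nonneg_right (abs_pow_le_one_add_pow_four hk v) (hg0 v)

/-- Key computation of the velocity integrals against `v^3` and `v^2`. -/
lemma inner_integrals {T₁ T₂ Tb α ρ : ℝ} (hT₁ : 0 < T₁) (hT₂ : 0 < T₂)
    (hTb : Tb = (T₁ + T₂) / 2)
    (g : ℝ → ℝ) (hg_meas : Measurable g) (hg0 : ∀ v, 0 ≤ g v)
    (hg_int : Integrable (fun v => (1 + v ^ 4) * g v))
    (hρ : ρ = ∫ v, g v) (hpress : ∫ v, v ^ 2 * g v = Tb) (c : ℝ) :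
    (∫ v, (α * (ρ * Maxwellian (Tb / ρ) v)
        + (1 - α) * ρ * ((Maxwellian T₁ v + Maxwellian T₂ v) / 2) - g v) * (v ^ 3 * c)
      = -(∫ v, v ^ 3 * g v) * c)
    ∧ (∫ v, (α * (ρ * Maxwellian (Tb / ρ) v)
        + (1 - α) * ρ * ((Maxwellian T₁ v + Maxwellian T₂ v) / 2) - g v) * (v ^ 2 * c)
      = ((1 - α) * Tb * (ρ - 1)) * c) := by
  have hTbpos : 0 < Tb := by rw [hTb]; linarith
  have hg_intk : ∀ k : ℕ, k ≤ 4 → Integrable (fun v : ℝ => v ^ k * g v) :=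
    fun k hk => integrable_pow_mul_of_moment hg_meas hg0 hg_int hk
  have hg_int0 : Integrable g := by
    have := hg_intk 0 (by norm_num)
    simpa using this
  have hρpos : 0 < ρ := by
    rcases (hρ ▸ integral_nonneg hg0 : (0:ℝ) ≤ ρ).lt_or_eq with h | h
    · exact h
    · exfalso
      have hz : g =ᵐ[volume] 0 := by
        rw [← integral_eq_zero_iff_of_nonneg hg0 hg_int0, ← hρ, ← h]
      exact absurd hpress (by
        have : (fun v : ℝ => v ^ 2 * g v) =ᵐ[volume] 0 := by
          filter_upwards [hz] with v hv
          simp [hv]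
        rw [integral_eq_zero_of_ae this]
        exact fun hc => by rw [← hc] at hTbpos; exact lt_irrefl 0 hTbpos)
  have hT : 0 < Tb / ρ := div_pos hTbpos hρpos
  have key : ∀ k : ℕ, k ≤ 4 →
      ∫ v, (α * (ρ * Maxwellian (Tb / ρ) v)
        + (1 - α) * ρ * ((Maxwellian T₁ v + Maxwellian T₂ v) / 2) - g v) * (v ^ k * c)
      = (α * ρ * c) * (∫ v, v ^ k * Maxwellian (Tb / ρ) v)
        + ((1 - α) * ρ * c / 2) * (∫ v, v ^ k * Maxwellian T₁ v)
        + ((1 - α) * ρ * c / 2) * (∫ v, v ^ k * Maxwellian T₂ v)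
        - c * (∫ v, v ^ k * g v) := by
    intro k hk
    have e1 : (fun v => (α * (ρ * Maxwellian (Tb / ρ) v)
        + (1 - α) * ρ * ((Maxwellian T₁ v + Maxwellian T₂ v) / 2) - g v) * (v ^ k * c))
        = fun v => ((α * ρ * c) * (v ^ k * Maxwellian (Tb / ρ) v)
          + ((1 - α) * ρ * c / 2) * (v ^ k * Maxwellian T₁ v)
          + ((1 - α) * ρ * c / 2) * (v ^ k * Maxwellian T₂ v))
          - c * (v ^ k * g v) := by
      funext v; ring
    rw [e1, integral_sub, integral_add, integral_add,
      integral_const_mul, integral_const_mul, integral_const_mul, integral_const_mul]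
    · exact ((integrable_pow_mul_maxwellian hT k).const_mul _)
    · exact ((integrable_pow_mul_maxwellian hT₁ k).const_mul _)
    · exact (((integrable_pow_mul_maxwellian hT k).const_mul _).add
        ((integrable_pow_mul_maxwellian hT₁ k).const_mul _))
    · exact ((integrable_pow_mul_maxwellian hT₂ k).const_mul _)
    · exact ((((integrable_pow_mul_maxwellian hT k).const_mul _).add
        ((integrable_pow_mul_maxwellian hT₁ k).const_mul _)).add
        ((integrable_pow_mul_maxwellian hT₂ k).const_mul _))
    · exact (hg_intk k hk).const_mul _
  constructor
  · rw [key 3 (by norm_num), integral_cube_mul_maxwellian, integral_cube_mul_maxwellian,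
      integral_cube_mul_maxwellian]
    ring
  · rw [key 2 (by norm_num), integral_sq_mul_maxwellian hT, integral_sq_mul_maxwellian hT₁,
      integral_sq_mul_maxwellian hT₂, hpress]
    have hρρ : ρ * (Tb / ρ) = Tb := mul_div_cancel₀ Tb (ne_of_gt hρpos)
    subst hTb
    field_simp
    ring

theorem fourth_moment_distributional_identity
    (T₁ T₂ α : ℝ) (hT₁ : 0 < T₁) (hT₂ : 0 < T₂) (hα : α ∈ Set.Ico (0:ℝ) 1)
    (f : ℝ → ℝ → ℝ)
    (hf_per : ∀ x v, f (x + 1) v = f x v)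
    (hf_nonneg : ∀ x v, 0 ≤ f x v)
    (hf_prob : ∫ x in Torus, ∫ v, f x v = 1)
    (hf_meas : Measurable (fun p : ℝ × ℝ => f p.1 p.2))
    (hf_moments : IntegrableOn (fun p : ℝ × ℝ => (1 + p.2 ^ 4) * f p.1 p.2)
      (Torus ×ˢ (Set.univ : Set ℝ)))
    -- constant pressure (consequence of the constant-pressure lemma)
    (h_press : ∀ x, press f x = (T₁ + T₂) / 2)
    -- steady state equation `v ∂ₓ f = α ℳ_f + (1-α) ρ_f G - f` in the weak sense
    (h_weak : ∀ φ : ℝ → ℝ → ℝ,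
      ContDiff ℝ (⊤ : ℕ∞) (fun p : ℝ × ℝ => φ p.1 p.2) →
      (∀ x v, φ (x + 1) v = φ x v) →
      (∫ x in Torus, ∫ v, f x v * (v * deriv (fun y => φ y v) x))
        = - ∫ x in Torus, ∫ v,
            (α * localMaxwellian f x v
              + (1 - α) * rho f x * ((Maxwellian T₁ v + Maxwellian T₂ v) / 2)
              - f x v) * φ x v) :
    -- `-d²/dx² ∫ v⁴ f dv = (1-α)((T₁+T₂)/2)(ρ_f - 1)` in the distributional sense
    ∀ φ : ℝ → ℝ,
      ContDiff ℝ (⊤ : ℕ∞) φ → (∀ x, φ (x + 1) = φ x) →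
      -(∫ x in Torus, (∫ v, v ^ 4 * f x v) * deriv (deriv φ) x)
        = ∫ x in Torus,
            (1 - α) * ((T₁ + T₂) / 2) * (rho f x - 1) * φ x := by
  intro φ hφ hφper
  set ψ := deriv φ with hψdef
  have hψ : ContDiff ℝ (⊤ : ℕ∞) ψ := by
    have h := (contDiff_succ_iff_deriv (n := ((⊤ : ℕ∞) : WithTop ℕ∞))).mp (by
      exact hφ)
    exact h.2.2
  have hφdiff : Differentiable ℝ φ := hφ.differentiable (by simp)
  have hψdiff : Differentiable ℝ ψ := hψ.differentiable (by simp)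
  have hφ1 : (fun y => φ (y + 1)) = φ := funext hφper
  have hψper : ∀ x, ψ (x + 1) = ψ x := by
    intro x
    calc ψ (x + 1) = deriv (fun y => φ (y + 1)) x := (deriv_comp_add_const φ 1 x).symm
    _ = ψ x := by rw [hφ1]
  -- a.e. integrability of velocity sections
  have hsect : ∀ᵐ x ∂(volume.restrict Torus),
      Integrable (fun v => (1 + v ^ 4) * f x v) := by
    have h1 : ((volume : Measure (ℝ × ℝ))).restrict (Torus ×ˢ (univ : Set ℝ))
        = (volume.restrict Torus).prod volume := by
      rw [Measure.volume_eq_prod, ← Measure.prod_restrict, Measure.restrict_univ]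
    have h2 : Integrable (fun p : ℝ × ℝ => (1 + p.2 ^ 4) * f p.1 p.2)
        ((volume.restrict Torus).prod volume) := by
      rw [← h1]; exact hf_moments
    exact h2.prod_right_ae
  have hfx : ∀ x, Measurable (f x) := fun x => hf_meas.comp measurable_prodMk_left
  -- apply the weak formulation to the two test functions
  have hw1 := h_weak (fun x v => v ^ 3 * ψ x)
    ((contDiff_snd.pow 3).mul (hψ.comp contDiff_fst))
    (fun x v => by show v ^ 3 * ψ (x + 1) = v ^ 3 * ψ x; rw [hψper])
  have hw2 := h_weak (fun x v => v ^ 2 * φ x)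
    ((contDiff_snd.pow 2).mul (hφ.comp contDiff_fst))
    (fun x v => by show v ^ 2 * φ (x + 1) = v ^ 2 * φ x; rw [hφper])
  beta_reduce at hw1 hw2
  -- rewrite the left-hand sides
  have hL1 : (fun x => ∫ v, f x v * (v * deriv (fun y => v ^ 3 * ψ y) x))
      = fun x => (∫ v, v ^ 4 * f x v) * deriv ψ x := by
    funext x
    have hd : ∀ v : ℝ, deriv (fun y => v ^ 3 * ψ y) x = v ^ 3 * deriv ψ x :=
      fun v => deriv_const_mul _ (hψdiff x)
    simp_rw [hd]
    rw [show (fun v : ℝ => f x v * (v * (v ^ 3 * deriv ψ x)))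
        = fun v : ℝ => (v ^ 4 * f x v) * deriv ψ x from funext fun v => by ring,
      integral_mul_const]
  have hL2 : (fun x => ∫ v, f x v * (v * deriv (fun y => v ^ 2 * φ y) x))
      = fun x => (∫ v, v ^ 3 * f x v) * ψ x := by
    funext x
    have hd : ∀ v : ℝ, deriv (fun y => v ^ 2 * φ y) x = v ^ 2 * ψ x :=
      fun v => deriv_const_mul _ (hφdiff x)
    simp_rw [hd]
    rw [show (fun v : ℝ => f x v * (v * (v ^ 2 * ψ x)))
        = fun v : ℝ => (v ^ 3 * f x v) * ψ x from funext fun v => by ring,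
      integral_mul_const]
  rw [hL1] at hw1
  rw [hL2] at hw2
  -- rewrite the right-hand sides using the inner velocity integrals
  have hR1 : (∫ x in Torus, ∫ v, (α * localMaxwellian f x v
        + (1 - α) * rho f x * ((Maxwellian T₁ v + Maxwellian T₂ v) / 2) - f x v)
          * (v ^ 3 * ψ x))
      = ∫ x in Torus, -(∫ v, v ^ 3 * f x v) * ψ x := by
    apply integral_congr_ae
    filter_upwards [hsect] with x hx
    have hloc : ∀ v, localMaxwellian f x v
        = rho f x * Maxwellian ((T₁ + T₂) / 2 / rho f x) v := by
      intro v; unfold localMaxwellian; rw [h_press]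
    simp_rw [hloc]
    exact (inner_integrals hT₁ hT₂ rfl (f x) (hfx x) (fun v => hf_nonneg x v) hx rfl
      (h_press x) (ψ x)).1
  have hR2 : (∫ x in Torus, ∫ v, (α * localMaxwellian f x v
        + (1 - α) * rho f x * ((Maxwellian T₁ v + Maxwellian T₂ v) / 2) - f x v)
          * (v ^ 2 * φ x))
      = ∫ x in Torus, ((1 - α) * ((T₁ + T₂) / 2) * (rho f x - 1)) * φ x := by
    apply integral_congr_ae
    filter_upwards [hsect] with x hx
    have hloc : ∀ v, localMaxwellian f x v
        = rho f x * Maxwellian ((T₁ + T₂) / 2 / rho f x) v := by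
      intro v; unfold localMaxwellian; rw [h_press]
    simp_rw [hloc]
    exact (inner_integrals hT₁ hT₂ rfl (f x) (hfx x) (fun v => hf_nonneg x v) hx rfl
      (h_press x) (φ x)).2
  rw [hR1] at hw1
  rw [hR2] at hw2
  -- simplify the double negation in hw1
  rw [show (fun x => -(∫ v, v ^ 3 * f x v) * ψ x)
      = fun x => -((∫ v, v ^ 3 * f x v) * ψ x) from funext fun x => by ring,
    integral_neg, neg_neg] at hw1
  have hfinal : (∫ x in Torus, (1 - α) * ((T₁ + T₂) / 2) * (rho f x - 1) * φ x)
      = ∫ x in Torus, ((1 - α) * ((T₁ + T₂) / 2) * (rho f x - 1)) * φ x := rfl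
  rw [hfinal]
  linarith [hw1, hw2]
end

section
/- Let G(v) = (M_{T₁}(v)+M_{T₂}(v))/2. Then ∫_R G(v)/(1+4π²v²) dv < 1; consequently, for mean-zero σ₁, σ₂ ∈ L²(T), the bilinear form Σ_{k≠0} ∫_R σ̂₂(k)‾ σ̂₁(k) G(v)/(1+4π²v²k²) dv is bounded in absolute value by (1−δ_G)‖σ₁‖_{L²}‖σ₂‖_{L²} for δ_G = 1 − ∫ G(v)/(1+4π²v²) dv > 0. -/
/-!
For `k ≠ 0` the weight `∫ G(v) / (1 + 4π²v²k²) dv` is at most its value at `k = 1`, and that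
value is strictly below `∫ G = 1` because the integrand is strictly smaller than `G` off `v = 0`.
Bounding every Fourier mode by this constant, Cauchy–Schwarz in `ℓ²` and Parseval on the torus
give the estimate.
-/

open MeasureTheory Real Complex

/-- `G = (M_{T₁} + M_{T₂})/2`. -/
noncomputable def Gres (T₁ T₂ v : ℝ) : ℝ := (Maxwellian T₁ v + Maxwellian T₂ v) / 2

/-- Fourier coefficient on the unit torus. -/
noncomputable def fourierCoef (σ : ℝ → ℝ) (k : ℤ) : ℂ :=
  ∫ x in Torus, (σ x : ℂ) * Complex.exp (-2 * Real.pi * Complex.I * (k : ℂ) * (x : ℂ))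

open ProbabilityTheory

lemma maxwellian_eq_gaussianPDFReal {T : ℝ} (hT : 0 ≤ T) :
    Maxwellian T = gaussianPDFReal 0 T.toNNReal := by
  ext v
  simp [Maxwellian, gaussianPDFReal, Real.coe_toNNReal _ hT]

lemma maxwellian_pos {T : ℝ} (hT : 0 < T) (v : ℝ) : 0 < Maxwellian T v := by
  rw [maxwellian_eq_gaussianPDFReal hT.le]
  exact gaussianPDFReal_pos _ _ _ (Real.toNNReal_pos.2 hT).ne'

lemma integrable_maxwellian {T : ℝ} (hT : 0 ≤ T) : Integrable (Maxwellian T) := by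
  rw [maxwellian_eq_gaussianPDFReal hT]
  exact integrable_gaussianPDFReal _ _

lemma integral_maxwellian {T : ℝ} (hT : 0 < T) : ∫ v, Maxwellian T v = 1 := by
  rw [maxwellian_eq_gaussianPDFReal hT.le]
  exact integral_gaussianPDFReal_eq_one _ (Real.toNNReal_pos.2 hT).ne'

section
variable {T₁ T₂ : ℝ}

lemma gres_pos (hT₁ : 0 < T₁) (hT₂ : 0 < T₂) (v : ℝ) : 0 < Gres T₁ T₂ v :=
  half_pos (add_pos (maxwellian_pos hT₁ v) (maxwellian_pos hT₂ v))

lemma integrable_gres (hT₁ : 0 ≤ T₁) (hT₂ : 0 ≤ T₂) : Integrable (Gres T₁ T₂) :=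
  ((integrable_maxwellian hT₁).add (integrable_maxwellian hT₂)).div_const 2

lemma integral_gres (hT₁ : 0 < T₁) (hT₂ : 0 < T₂) : ∫ v, Gres T₁ T₂ v = 1 := by
  simp only [Gres]
  rw [integral_div, integral_add (integrable_maxwellian hT₁.le) (integrable_maxwellian hT₂.le),
    integral_maxwellian hT₁, integral_maxwellian hT₂]
  norm_num

end

section
variable {G : ℝ → ℝ}

lemma one_le_one_add_mul_sq_mul {c : ℝ} (hc : 0 ≤ c) (v : ℝ) :
    1 ≤ 1 + 4 * π ^ 2 * v ^ 2 * c :=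
  le_add_of_nonneg_right (by positivity)

lemma integrable_div_one_add_mul_sq_mul (hG : Integrable G) {c : ℝ} (hc : 0 ≤ c) :
    Integrable fun v => G v / (1 + 4 * π ^ 2 * v ^ 2 * c) := by
  simp only [div_eq_inv_mul]
  refine hG.bdd_mul (c := 1) (by fun_prop) (Filter.Eventually.of_forall fun v => ?_)
  rw [norm_inv, Real.norm_of_nonneg (zero_le_one.trans (one_le_one_add_mul_sq_mul hc v))]
  exact inv_le_one_of_one_le₀ (one_le_one_add_mul_sq_mul hc v)

lemma integral_div_one_add_mul_sq_mul_le (hG : Integrable G) (hG₀ : 0 ≤ G) {c : ℝ} (hc : 1 ≤ c) :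
    ∫ v, G v / (1 + 4 * π ^ 2 * v ^ 2 * c) ≤ ∫ v, G v / (1 + 4 * π ^ 2 * v ^ 2) := by
  have h1 := integrable_div_one_add_mul_sq_mul hG zero_le_one
  simp only [mul_one] at h1
  refine integral_mono (integrable_div_one_add_mul_sq_mul hG (zero_le_one.trans hc)) h1 fun v => ?_
  refine div_le_div_of_nonneg_left (hG₀ v) (by positivity) ?_
  nlinarith [sq_nonneg (π * v)]

lemma integral_div_one_add_mul_sq_lt (hG : Integrable G) (hG₀ : ∀ v, 0 < G v) :
    ∫ v, G v / (1 + 4 * π ^ 2 * v ^ 2) < ∫ v, G v := by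
  have h1 := integrable_div_one_add_mul_sq_mul hG zero_le_one
  simp only [mul_one] at h1
  rw [← sub_pos, ← integral_sub hG h1,
    integral_pos_iff_support_of_nonneg (f := fun v => G v - G v / (1 + 4 * π ^ 2 * v ^ 2)) _
      (hG.sub h1)]
  · refine lt_of_lt_of_le ?_ (measure_mono (s := Set.Ioi 0) fun v (hv : 0 < v) => ?_)
    · simp
    · refine (sub_pos.2 (div_lt_self (hG₀ v) ?_)).ne'
      have : 0 < 4 * π ^ 2 * v ^ 2 := by positivity
      linarith
  · intro v
    simpa using div_le_self (hG₀ v).le (by simpa using one_le_one_add_mul_sq_mul zero_le_one v)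

end

lemma fourierCoef_eq_fourierCoeffOn (σ : ℝ → ℝ) (k : ℤ) :
    fourierCoef σ k = fourierCoeffOn (by norm_num : -(1:ℝ) / 2 < 1 / 2) (fun x => (σ x : ℂ)) k := by
  rw [fourierCoeffOn_eq_integral, fourierCoef, Torus, integral_Icc_eq_integral_Ioc,
    ← intervalIntegral.integral_of_le (by norm_num)]
  rw [show (1 / 2 - -1 / 2 : ℝ) = 1 by norm_num, div_one, one_smul]
  refine intervalIntegral.integral_congr fun x _ => ?_
  rw [fourier_coe_apply, smul_eq_mul, mul_comm]
  push_cast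
  ring_nf

lemma hasSum_sq_norm_fourierCoef {σ : ℝ → ℝ} (hσ : MemLp σ 2 (volume.restrict Torus)) :
    HasSum (fun k => ‖fourierCoef σ k‖ ^ 2) (∫ x in Torus, σ x ^ 2) := by
  have hab : -(1:ℝ) / 2 < 1 / 2 := by norm_num
  have hL2 : MemLp (fun x => (σ x : ℂ)) 2 (volume.restrict (Set.Ioc (-(1:ℝ) / 2) (1 / 2))) :=
    hσ.ofReal.mono_measure (Measure.restrict_mono Set.Ioc_subset_Icc_self le_rfl)
  convert hasSum_sq_fourierCoeffOn hab hL2 using 1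
  · simp [fourierCoef_eq_fourierCoeffOn]
  · rw [Torus, integral_Icc_eq_integral_Ioc, ← intervalIntegral.integral_of_le hab.le]
    norm_num

lemma norm_tsum_subtype_conj_mul_mul_le {ι : Type*} {a b : ι → ℂ} {A B : ℝ}
    (ha : HasSum (fun k => ‖a k‖ ^ 2) A) (hb : HasSum (fun k => ‖b k‖ ^ 2) B)
    {p : ι → Prop} {w : ι → ℝ} {J : ℝ} (hJ : 0 ≤ J) (hw : ∀ k, p k → |w k| ≤ J) :
    ‖∑' k : {k // p k}, (starRingEnd ℂ) (b k) * a k * (w k : ℂ)‖ ≤ J * √A * √B := by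
  have hA : 0 ≤ A := ha.nonneg fun _ => by positivity
  have hB : 0 ≤ B := hb.nonneg fun _ => by positivity
  obtain ⟨C, -, hC, hab⟩ := Real.inner_le_Lp_mul_Lq_hasSum_of_nonneg .two_two (sqrt_nonneg A)
    (sqrt_nonneg B) (fun k => norm_nonneg (a k)) (fun k => norm_nonneg (b k))
    (by simpa [Real.rpow_two, sq_sqrt hA] using ha) (by simpa [Real.rpow_two, sq_sqrt hB] using hb)
  have hsub : ∑' k : {k // p k}, ‖a k‖ * ‖b k‖ ≤ C :=
    hab.tsum_eq ▸ hab.summable.tsum_subtype_le _ {k | p k} fun k => by positivity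
  refine tsum_of_norm_bounded ((hab.summable.subtype _).hasSum.mul_left J) (fun k => ?_) |>.trans ?_
  · rw [Function.comp_apply, norm_mul, norm_mul, Complex.norm_conj, Complex.norm_real,
      Real.norm_eq_abs, mul_comm J, mul_comm ‖b k‖]
    exact mul_le_mul_of_nonneg_left (hw k k.2) (by positivity)
  · rw [mul_assoc]
    exact mul_le_mul_of_nonneg_left (hsub.trans hC) hJ

theorem reservoir_bilinear_form_contractive
    (T₁ T₂ : ℝ) (hT₁ : 0 < T₁) (hT₂ : 0 < T₂) :
    (∫ v : ℝ, Gres T₁ T₂ v / (1 + 4 * Real.pi ^ 2 * v ^ 2)) < 1 ∧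
    ∀ σ₁ σ₂ : ℝ → ℝ,
      Measurable σ₁ → Measurable σ₂ →
      IntegrableOn (fun x => (σ₁ x) ^ 2) Torus →
      IntegrableOn (fun x => (σ₂ x) ^ 2) Torus →
      (∫ x in Torus, σ₁ x = 0) → (∫ x in Torus, σ₂ x = 0) →
      ‖∑' k : {k : ℤ // k ≠ 0},
          (starRingEnd ℂ) (fourierCoef σ₂ (k : ℤ)) * fourierCoef σ₁ (k : ℤ) *
            ((∫ v : ℝ, Gres T₁ T₂ v /
                (1 + 4 * Real.pi ^ 2 * v ^ 2 * ((k : ℤ) : ℝ) ^ 2) : ℝ) : ℂ)‖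
        ≤ (1 - (1 - ∫ v : ℝ, Gres T₁ T₂ v / (1 + 4 * Real.pi ^ 2 * v ^ 2))) *
            Real.sqrt (∫ x in Torus, (σ₁ x) ^ 2) *
            Real.sqrt (∫ x in Torus, (σ₂ x) ^ 2) := by
  have hG := integrable_gres hT₁.le hT₂.le
  have hG₀ := gres_pos hT₁ hT₂
  have hJ₀ : 0 ≤ ∫ v, Gres T₁ T₂ v / (1 + 4 * π ^ 2 * v ^ 2) :=
    integral_nonneg fun v => div_nonneg (hG₀ v).le (by positivity)
  refine ⟨integral_gres hT₁ hT₂ ▸ integral_div_one_add_mul_sq_lt hG hG₀, ?_⟩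
  intro σ₁ σ₂ hm₁ hm₂ hi₁ hi₂ _ _
  rw [sub_sub_cancel]
  refine norm_tsum_subtype_conj_mul_mul_le
    (hasSum_sq_norm_fourierCoef ((memLp_two_iff_integrable_sq hm₁.aestronglyMeasurable).2 hi₁))
    (hasSum_sq_norm_fourierCoef ((memLp_two_iff_integrable_sq hm₂.aestronglyMeasurable).2 hi₂))
    hJ₀ (p := fun k => k ≠ 0)
    (w := fun k : ℤ => ∫ v, Gres T₁ T₂ v / (1 + 4 * π ^ 2 * v ^ 2 * (k : ℝ) ^ 2)) fun k hk => ?_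
  rw [abs_of_nonneg (integral_nonneg fun v => div_nonneg (hG₀ v).le (by positivity))]
  exact integral_div_one_add_mul_sq_mul_le hG (fun v => (hG₀ v).le)
    (mod_cast (one_le_sq_iff_one_le_abs _).2 (Int.one_le_abs hk))
end
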